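/- For every nonnegative integer n, the sum over k from 0 to n of C(n,k)^{-1} equals (n+1) times the sum over k from 0 to n of 1/((n+1-k)·2^k). -/

import Mathlib

/-!
Write `S n = ∑ₖ 1 / C(n,k)`. Since `C(n+1,k) = (n+1) C(n,k) / (n+1-k)` and
`C(n+1,k+1) = (n+1) C(n,k) / (k+1)`, adjacent terms of `S (n+1)` pair up as
`1 / C(n+1,k) + 1 / C(n+1,k+1) = (n+2) / ((n+1) C(n,k))`; counting every term of `S (n+1)`
twice this way gives `S (n+1) / (n+2) = 1 / (n+2) + S n / (2 (n+1))`. The sum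
`T n = ∑ₖ 1 / ((n+1-k) 2^k)` obeys the same recursion `T (n+1) = 1 / (n+2) + T n / 2`,
so `S n = (n+1) T n` by induction.
-/

open Finset

variable {K : Type*} [Field K]

theorem inv_choose_succ_add_inv_choose_succ_succ [CharZero K] {n k : ℕ} (hk : k ≤ n) :
    ((n + 1).choose k : K)⁻¹ + ((n + 1).choose (k + 1) : K)⁻¹ =
      (n + 2) / (n + 1) * (n.choose k : K)⁻¹ := by
  have hlow : (n.choose k : K) * (n + 1) = (n + 1).choose k * (n + 1 - k) := by
    have := Nat.choose_mul_succ_eq n k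
    rw [← Nat.cast_inj (R := K)] at this
    push_cast [Nat.cast_sub (Nat.le_succ_of_le hk)] at this
    exact this
  have hhigh : ((n : K) + 1) * n.choose k = (n + 1).choose (k + 1) * (k + 1) := by
    exact_mod_cast Nat.add_one_mul_choose_eq n k
  have : (n.choose k : K) ≠ 0 := by exact_mod_cast (Nat.choose_pos hk).ne'
  have : ((n + 1).choose k : K) ≠ 0 := by exact_mod_cast (Nat.choose_pos (by omega)).ne'
  have : ((n + 1).choose (k + 1) : K) ≠ 0 := by exact_mod_cast (Nat.choose_pos (by omega)).ne'
  field_simp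
  linear_combination ((n + 1).choose k : K) * hhigh + ((n + 1).choose (k + 1) : K) * hlow

theorem two_mul_sum_inv_choose_succ [CharZero K] (n : ℕ) :
    2 * ∑ k ∈ range (n + 2), ((n + 1).choose k : K)⁻¹ =
      2 + (n + 2) / (n + 1) * ∑ k ∈ range (n + 1), (n.choose k : K)⁻¹ := by
  have hpairs :
      ∑ k ∈ range (n + 1), (((n + 1).choose k : K)⁻¹ + ((n + 1).choose (k + 1) : K)⁻¹) =
        (n + 2) / (n + 1) * ∑ k ∈ range (n + 1), (n.choose k : K)⁻¹ := by
    rw [mul_sum]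
    exact sum_congr rfl fun k hk =>
      inv_choose_succ_add_inv_choose_succ_succ (mem_range_succ_iff.mp hk)
  have hlast : ∑ k ∈ range (n + 2), ((n + 1).choose k : K)⁻¹ =
      ∑ k ∈ range (n + 1), ((n + 1).choose k : K)⁻¹ + 1 := by
    simp only [sum_range_succ _ (n + 1), Nat.choose_self, Nat.cast_one, inv_one]
  have hfirst : ∑ k ∈ range (n + 2), ((n + 1).choose k : K)⁻¹ =
      ∑ k ∈ range (n + 1), ((n + 1).choose (k + 1) : K)⁻¹ + 1 := by
    simp only [sum_range_succ', Nat.choose_zero_right, Nat.cast_one, inv_one]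
  rw [← hpairs, sum_add_distrib]
  linear_combination hlast + hfirst

theorem sum_one_div_sub_mul_two_pow_succ (n : ℕ) :
    ∑ k ∈ range (n + 2), 1 / ((((n + 1 : ℕ) : K) + 1 - k) * 2 ^ k) =
      1 / (n + 2) + (∑ k ∈ range (n + 1), 1 / (((n : K) + 1 - k) * 2 ^ k)) / 2 := by
  rw [sum_range_succ', sum_div, add_comm]
  push_cast
  congr 1
  · ring
  · refine sum_congr rfl fun k _ => ?_
    rw [pow_succ, ← mul_assoc, ← div_div]
    ring_nf

theorem stmt_1 (n : ℕ) :
    ∑ k ∈ range (n + 1), ((n.choose k : ℚ))⁻¹ =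
      ((n : ℚ) + 1) * ∑ k ∈ range (n + 1), 1 / (((n : ℚ) + 1 - k) * 2 ^ k) := by
  induction n with
  | zero => norm_num
  | succ n ih =>
    rw [← mul_right_inj' (two_ne_zero' ℚ), two_mul_sum_inv_choose_succ, ih,
      sum_one_div_sub_mul_two_pow_succ]
    push_cast
    field_simp
    ring
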